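/- Let K_{ℓ1,...,ℓk} be the complete k-partite graph on n = ℓ1 + ⋯ + ℓk vertices with parts of sizes ℓ1 ≥ ⋯ ≥ ℓk ≥ 1 and k ≥ 2, and let p be the number of parts of size at least 2. Then the distance Laplacian spectrum of K_{ℓ1,...,ℓk} consists of the eigenvalue n + ℓj with multiplicity ℓj − 1 for each 1 ≤ j ≤ p, the eigenvalue n with multiplicity k − 1, and the eigenvalue 0 with multiplicity 1. -/

import Mathlib

open Finset Polynomial

/-- The complete multipartite graph with parts `Fin (ℓ j)`, `j : Fin k`. -/
def completeMultipartiteGraph' {k : ℕ} (ℓ : Fin k → ℕ) :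
    SimpleGraph (Σ j : Fin k, Fin (ℓ j)) where
  Adj a b := a.1 ≠ b.1
  symm := ⟨fun _ _ h => Ne.symm h⟩
  loopless := ⟨fun _ h => h rfl⟩

/-- Transmission of a vertex. -/
noncomputable def transmission {V : Type*} [Fintype V] (G : SimpleGraph V) (v : V) : ℕ :=
  ∑ u : V, G.dist u v

/-- The distance Laplacian matrix `DL(G) = Tr(G) − D(G)`. -/
noncomputable def distLap {V : Type*} [Fintype V] [DecidableEq V] (G : SimpleGraph V) :
    Matrix V V ℝ :=
  Matrix.diagonal (fun v => (transmission G v : ℝ)) -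
    Matrix.of (fun u v => (G.dist u v : ℝ))

/-!
Distances are `1` between parts and `2` inside a part, so for `c = y - n` one gets
`y • 1 - DL = A + J` with `J` the all-ones matrix and `A = diag (c - ℓ_{part v}) + E Eᵀ`,
where `E` is the vertex-part incidence matrix. The matrix determinant lemma for the low-rank
update `E Eᵀ` of a diagonal matrix gives `det A = c ^ k ∏ⱼ (c - ℓⱼ) ^ (ℓⱼ - 1)`; since
`A 𝟙 = c 𝟙`, the rank one update `J` contributes the factor `1 + n / c`. Both sides of the
identity are therefore polynomials agreeing at every `y > 2n`.
-/

open Matrix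

lemma pow_mul_one_add_div {K : Type*} [Field K] {a : K} (ha : a ≠ 0) {m : ℕ} (hm : 1 ≤ m) (b : K) :
    a ^ m * (1 + b / a) = a ^ (m - 1) * (a + b) := by
  obtain ⟨m, rfl⟩ := Nat.exists_eq_add_of_le' hm
  rw [Nat.add_sub_cancel, pow_succ, mul_assoc, mul_one_add, mul_div_cancel₀ _ ha]

section FiberMatrix

variable {K : Type*} [Field K] {ι κ : Type*} [DecidableEq κ]

variable (K) in
def fiberMatrix (p : ι → κ) : Matrix ι κ K := of fun i j => if p i = j then 1 else 0

lemma fiberMatrix_mul_transpose_apply [Fintype κ] (p : ι → κ) (i i' : ι) :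
    (fiberMatrix K p * (fiberMatrix K p)ᵀ) i i' = if p i = p i' then 1 else 0 := by
  simp [fiberMatrix, mul_apply, eq_comm]

lemma fiberMatrix_mul_transpose_mulVec_one [Fintype ι] [Fintype κ] (p : ι → κ) :
    (fiberMatrix K p * (fiberMatrix K p)ᵀ) *ᵥ 1 = fun i => (#{i' | p i' = p i} : K) := by
  ext i
  simp [mulVec, dotProduct, fiberMatrix_mul_transpose_apply, sum_boole, eq_comm]

lemma transpose_fiberMatrix_mul_diagonal_comp [Fintype ι] [DecidableEq ι] [Fintype κ]
    (p : ι → κ) (f : κ → K) :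
    (fiberMatrix K p)ᵀ * diagonal (f ∘ p) = diagonal f * (fiberMatrix K p)ᵀ := by
  ext j i
  by_cases h : p i = j <;> simp [fiberMatrix, h]

lemma transpose_fiberMatrix_mul_self [Fintype ι] (p : ι → κ) :
    (fiberMatrix K p)ᵀ * fiberMatrix K p = diagonal fun j => (#{i | p i = j} : K) := by
  ext j j'
  by_cases h : j = j'
  · subst h
    simp [fiberMatrix, mul_apply, ← ite_and, sum_boole]
  · have hdisj (i : ι) : ¬(p i = j' ∧ p i = j) := fun ⟨h1, h2⟩ => h (h2.symm.trans h1)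
    simp [fiberMatrix, mul_apply, h, ← ite_and, hdisj]

lemma inv_diagonal_of_ne_zero [Fintype ι] [DecidableEq ι] {d : ι → K} (hd : ∀ i, d i ≠ 0) :
    (diagonal d)⁻¹ = diagonal d⁻¹ :=
  inv_eq_left_inv <| by rw [diagonal_mul_diagonal]; simp [hd]

theorem det_diagonal_comp_add_fiberMatrix_mul_transpose [Fintype ι] [DecidableEq ι] [Fintype κ]
    (p : ι → κ) {e : κ → K} (he : ∀ j, e j ≠ 0) :
    det (diagonal (e ∘ p) + fiberMatrix K p * (fiberMatrix K p)ᵀ) =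
      ∏ j, e j ^ #{i | p i = j} * (1 + #{i | p i = j} / e j) := by
  have hunit : IsUnit (diagonal (e ∘ p)).det := by
    simpa [det_diagonal, prod_ne_zero_iff] using fun i => he (p i)
  rw [det_add_mul _ _ hunit, inv_diagonal_of_ne_zero (d := e ∘ p) fun i => he (p i),
    show (e ∘ p)⁻¹ = e⁻¹ ∘ p from rfl, transpose_fiberMatrix_mul_diagonal_comp, Matrix.mul_assoc,
    transpose_fiberMatrix_mul_self, diagonal_mul_diagonal, ← diagonal_one, diagonal_add,
    det_diagonal, det_diagonal, Function.comp_def, ← prod_fiberwise' univ p,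
    ← prod_mul_distrib]
  simp [div_eq_inv_mul]

theorem det_add_allOnes_of_mulVec_one [Fintype ι] [DecidableEq ι] {A : Matrix ι ι K}
    (hA : IsUnit A.det) {c : K} (hc : c ≠ 0) (hA1 : A *ᵥ 1 = c • 1) :
    det (A + of fun _ _ => 1) = det A * (1 + Fintype.card ι / c) := by
  have hinv : A⁻¹ *ᵥ 1 = c⁻¹ • 1 := by
    rw [← inv_smul_smul₀ hc (A⁻¹ *ᵥ 1), ← mulVec_smul, ← hA1, mulVec_mulVec,
      nonsing_inv_mul _ hA, one_mulVec]
  have hJ : replicateCol Unit (1 : ι → K) * replicateRow Unit (1 : ι → K) = of fun _ _ => 1 := by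
    ext; simp [replicateCol, replicateRow, mul_apply]
  rw [← hJ, det_add_replicateCol_mul_replicateRow hA, det_unique (n := Unit), Matrix.mul_assoc,
    ← replicateCol_mulVec, hinv, replicateRow_mul_replicateCol]
  simp [dotProduct_smul, one_dotProduct_one, div_eq_inv_mul]

end FiberMatrix

section CompleteMultipartite

variable {k : ℕ} {ℓ : Fin k → ℕ}

local notation "V" => Σ j : Fin k, Fin (ℓ j)
local notation "E" => fiberMatrix ℝ (Sigma.fst : V → Fin k)

lemma card_filter_sigma_fst_eq (j : Fin k) : #{v : V | v.1 = j} = ℓ j := by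
  rw [← Fintype.card_subtype, Fintype.card_congr (Equiv.sigmaSubtype j), Fintype.card_fin]

lemma completeMultipartiteGraph'_dist (hk : 2 ≤ k) (hpos : ∀ j, 1 ≤ ℓ j) (u v : V) :
    (completeMultipartiteGraph' ℓ).dist u v = if u = v then 0 else if u.1 = v.1 then 2 else 1 := by
  rcases eq_or_ne u v with rfl | huv
  · simp
  by_cases hpart : u.1 = v.1
  · have : Nontrivial (Fin k) := Fin.nontrivial_iff_two_le.mpr hk
    obtain ⟨j, hj⟩ := exists_ne u.1
    let w : V := ⟨j, ⟨0, hpos j⟩⟩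
    have huw : (completeMultipartiteGraph' ℓ).Adj u w := Ne.symm hj
    have hwv : (completeMultipartiteGraph' ℓ).Adj w v := show j ≠ v.1 from hpart ▸ hj
    have hle : (completeMultipartiteGraph' ℓ).dist u v ≤ 2 :=
      SimpleGraph.dist_le (.cons huw (.cons hwv .nil))
    have hlt := (huw.reachable.trans hwv.reachable).one_lt_dist_of_ne_of_not_adj huv
      (fun h => h hpart)
    simp only [huv, hpart, if_false, if_true]
    omega
  · simp only [huv, hpart, if_false]
    exact SimpleGraph.dist_eq_one_iff_adj.mpr hpart

lemma distLap_completeMultipartiteGraph' (hk : 2 ≤ k) (hpos : ∀ j, 1 ≤ ℓ j) :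
    distLap (completeMultipartiteGraph' ℓ) =
      diagonal (fun v => ((∑ j, ℓ j : ℕ) : ℝ) + ℓ v.1) - E * Eᵀ - of fun _ _ => 1 := by
  have hdist (u v : V) : ((completeMultipartiteGraph' ℓ).dist u v : ℝ) =
      1 + (if u.1 = v.1 then 1 else 0) - (if u = v then 2 else 0) := by
    rw [completeMultipartiteGraph'_dist hk hpos]
    split_ifs <;> simp_all <;> norm_num
  have htrans (v : V) :
      (transmission (completeMultipartiteGraph' ℓ) v : ℝ) = (∑ j, ℓ j : ℕ) + ℓ v.1 - 2 := by
    simp only [transmission, Nat.cast_sum, hdist, sum_sub_distrib, sum_add_distrib, sum_boole,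
      card_filter_sigma_fst_eq]
    simp
  ext u v
  rw [distLap, Matrix.sub_apply, Matrix.sub_apply, Matrix.sub_apply,
    fiberMatrix_mul_transpose_apply]
  simp only [diagonal_apply, of_apply, htrans, hdist]
  split_ifs <;> simp_all <;> ring

lemma scalar_sub_distLap_completeMultipartiteGraph' (hk : 2 ≤ k) (hpos : ∀ j, 1 ≤ ℓ j) (y : ℝ) :
    scalar V y - distLap (completeMultipartiteGraph' ℓ) =
      diagonal ((fun j => y - (∑ j, ℓ j : ℕ) - ℓ j) ∘ Sigma.fst) + E * Eᵀ + of fun _ _ => 1 := by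
  rw [distLap_completeMultipartiteGraph' hk hpos]
  ext u v
  simp only [scalar_apply, Matrix.sub_apply, Matrix.add_apply, diagonal_apply, of_apply,
    Function.comp_apply]
  split_ifs <;> ring

lemma diagonal_sub_add_fiberMatrix_mul_transpose_mulVec_one (c : ℝ) :
    (diagonal ((fun j => c - ℓ j) ∘ Sigma.fst) + E * Eᵀ) *ᵥ 1 = c • 1 := by
  ext v
  simp [add_mulVec, mulVec_diagonal, fiberMatrix_mul_transpose_mulVec_one,
    card_filter_sigma_fst_eq]

lemma det_diagonal_sub_add_fiberMatrix_mul_transpose (hpos : ∀ j, 1 ≤ ℓ j) {c : ℝ}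
    (hc : ∀ j, c - ℓ j ≠ 0) :
    det (diagonal ((fun j => c - ℓ j) ∘ Sigma.fst) + E * Eᵀ) =
      ∏ j, (c - ℓ j) ^ (ℓ j - 1) * c := by
  rw [det_diagonal_comp_add_fiberMatrix_mul_transpose _ hc]
  refine prod_congr rfl fun j _ => ?_
  rw [card_filter_sigma_fst_eq, pow_mul_one_add_div (hc j) (hpos j), sub_add_cancel]

theorem det_scalar_sub_distLap_completeMultipartiteGraph' (hk : 2 ≤ k) (hpos : ∀ j, 1 ≤ ℓ j)
    {y : ℝ} (hy : 2 * ((∑ j, ℓ j : ℕ) : ℝ) < y) :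
    det (scalar V y - distLap (completeMultipartiteGraph' ℓ)) =
      (∏ j, (y - (∑ j, ℓ j : ℕ) - ℓ j) ^ (ℓ j - 1)) * (y - (∑ j, ℓ j : ℕ)) ^ (k - 1) * y := by
  have hℓN (j : Fin k) : (ℓ j : ℝ) ≤ (∑ j, ℓ j : ℕ) := by
    exact_mod_cast single_le_sum (f := ℓ) (fun _ _ => Nat.zero_le _) (mem_univ j)
  set N : ℝ := ((∑ j, ℓ j : ℕ) : ℝ)
  have hc : 0 < y - N := by linarith [(by positivity : (0 : ℝ) ≤ N)]
  have hcℓ (j : Fin k) : y - N - ℓ j ≠ 0 := by linarith [hℓN j]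
  have hdetA := det_diagonal_sub_add_fiberMatrix_mul_transpose hpos hcℓ
  have hunit : IsUnit (det (diagonal ((fun j => y - N - ℓ j) ∘ Sigma.fst) + E * Eᵀ)) := by
    rw [hdetA, isUnit_iff_ne_zero]
    exact prod_ne_zero_iff.mpr fun j _ => mul_ne_zero (pow_ne_zero _ (hcℓ j)) hc.ne'
  rw [scalar_sub_distLap_completeMultipartiteGraph' hk hpos, det_add_allOnes_of_mulVec_one hunit
    hc.ne' (diagonal_sub_add_fiberMatrix_mul_transpose_mulVec_one _), hdetA, prod_mul_distrib,
    prod_const, card_univ, Fintype.card_fin, Fintype.card_sigma]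
  simp only [Fintype.card_fin]
  rw [mul_assoc, pow_mul_one_add_div hc.ne' (by omega), sub_add_cancel, mul_assoc]

end CompleteMultipartite

theorem stmt3_general {k : ℕ} (hk : 2 ≤ k) (ℓ : Fin k → ℕ)
    (hpos : ∀ j, 1 ≤ ℓ j) (n : ℕ) (hn : n = ∑ j, ℓ j) :
    (distLap (completeMultipartiteGraph' ℓ)).charpoly =
      (∏ j ∈ Finset.univ.filter (fun j : Fin k => 2 ≤ ℓ j),
          (X - C ((n : ℝ) + (ℓ j : ℝ))) ^ (ℓ j - 1)) *
        (X - C (n : ℝ)) ^ (k - 1) * X := by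
  subst hn
  refine eq_of_infinite_eval_eq _ _
    ((Set.Ioi_infinite (2 * ((∑ j, ℓ j : ℕ) : ℝ))).mono fun y hy => ?_)
  have hfilter : ∏ j with 2 ≤ ℓ j, (y - ((∑ j, ℓ j : ℕ) + ℓ j : ℝ)) ^ (ℓ j - 1) =
      ∏ j, (y - (∑ j, ℓ j : ℕ) - ℓ j) ^ (ℓ j - 1) := by
    rw [prod_filter_of_ne fun j _ h => ?_]
    · simp_rw [sub_add_eq_sub_sub]
    · by_contra h2
      exact h (by rw [show ℓ j - 1 = 0 by omega, pow_zero])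
  simp only [Set.mem_ofPred_eq, eval_charpoly, eval_mul, eval_prod, eval_pow, eval_sub, eval_X,
    eval_C, hfilter]
  exact det_scalar_sub_distLap_completeMultipartiteGraph' hk hpos hy

/-- The distance Laplacian spectrum of the complete `k`-partite graph
`K_{ℓ₁,…,ℓ_k}` on `n = ℓ₁ + ⋯ + ℓ_k` vertices (with `ℓ₁ ≥ ⋯ ≥ ℓ_k ≥ 1`, `k ≥ 2`)
consists of `n + ℓ_j` with multiplicity `ℓ_j - 1` for each part of size at least `2`,
of `n` with multiplicity `k - 1`, and of `0` with multiplicity `1`; equivalently its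
characteristic polynomial factors accordingly. -/
theorem stmt3 {k : ℕ} (hk : 2 ≤ k) (ℓ : Fin k → ℕ) (hmono : Antitone ℓ)
    (hpos : ∀ j, 1 ≤ ℓ j) (n : ℕ) (hn : n = ∑ j, ℓ j) :
    (distLap (completeMultipartiteGraph' ℓ)).charpoly =
      (∏ j ∈ Finset.univ.filter (fun j : Fin k => 2 ≤ ℓ j),
          (X - C ((n : ℝ) + (ℓ j : ℝ))) ^ (ℓ j - 1)) *
        (X - C (n : ℝ)) ^ (k - 1) * X :=
  stmt3_general hk ℓ hpos n hn
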